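/- arXiv:2103.10471 — 2 statements merged into one kernel-verified Lean document; each statement's English description precedes it below -/
import Mathlib

section
/- Let α ∈ (0,1) and let f be a pmf on ℕ with finite mean μ^{(f)} = ∑_{k} k·f(k) and finite variance (σ^{(f)})² = ∑_k k²·f(k) − (μ^{(f)})², with pgf Ψ, and let p be the pmf with pgf φ(z) = ∏_{i=0}^∞ Ψ(1 − α^i + α^i z). Then the mean μ^{(p)} and variance (σ^{(p)})² of p are finite and given by μ^{(p)} = μ^{(f)} / (1 − α) and (σ^{(p)})² = ((σ^{(f)})² + α·μ^{(f)}) / (1 − α²). -/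
/-!
Write `P = pgf p`, `F = pgf f` and `w z = 1 - α + α z`, so that `1 - w z = α (1 - z)`. Splitting off
the factor `i = 0` of the product gives the functional equation `P z = F z * P (w z)`.

A priori `p` need not have a mean. The functional equation gives
`1 - P z ≤ μ (1 - z) + (1 - P (w z))`; iterating along `wⁿ z → 1` yields
`1 - P z ≤ μ (1 - z) / (1 - α)`. Since `(1 - P z) / (1 - z) = ∑ p r (1 + z + ⋯ + z ^ (r - 1))`
increases to the mean as `z → 1⁻`, the mean `ν` of `p` is finite. The same iteration, applied to
`ν (1 - z) - (1 - P z) = (1 - z) ^ 2 ∑ p r ∑_{j < r} (1 + ⋯ + z ^ (j - 1))` with ratio `α ^ 2`,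
bounds the second factorial moment. Once both are finite, dividing the functional equation by
`1 - z`, resp. `(1 - z) ^ 2`, and letting `z → 1⁻` gives `ν = μ + α ν` and
`ν₂ = μ₂ + 2 α μ ν + α ^ 2 ν₂` for the second factorial moments.
-/

open Filter Topology Finset

lemma multipliable_of_mem_Icc {ι : Type*} {u : ι → ℝ} (hu : ∀ i, u i ∈ Set.Icc (0 : ℝ) 1) :
    Multipliable u := by
  classical
  refine ⟨⨅ s : Finset ι, ∏ i ∈ s, u i, tendsto_atTop_ciInf (fun s t hst => ?_) ⟨0, ?_⟩⟩
  · calc ∏ i ∈ t, u i = (∏ i ∈ t \ s, u i) * ∏ i ∈ s, u i := (prod_sdiff hst).symm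
      _ ≤ ∏ i ∈ s, u i := mul_le_of_le_one_left (prod_nonneg fun i _ => (hu i).1)
          (prod_le_one (fun i _ => (hu i).1) fun i _ => (hu i).2)
  · rintro _ ⟨s, rfl⟩
    exact prod_nonneg fun i _ => (hu i).1

lemma tendsto_tsum_mul_nhdsLT_one {q : ℕ → ℝ} {g : ℕ → ℝ → ℝ} (hq : ∀ r, 0 ≤ q r)
    (hg : ∀ r, Continuous (g r)) (hg0 : ∀ r, ∀ z ∈ Set.Icc (0 : ℝ) 1, 0 ≤ g r z)
    (hg1 : ∀ r, ∀ z ∈ Set.Icc (0 : ℝ) 1, g r z ≤ g r 1) (hs : Summable fun r => q r * g r 1) :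
    Tendsto (fun z => ∑' r, q r * g r z) (𝓝[<] 1) (𝓝 (∑' r, q r * g r 1)) := by
  refine tendsto_tsum_of_dominated_convergence hs
    (fun r => (((hg r).tendsto 1).mono_left nhdsWithin_le_nhds).const_mul (q r)) ?_
  filter_upwards [Ico_mem_nhdsLT zero_lt_one] with z hz r
  have hz : z ∈ Set.Icc (0 : ℝ) 1 := Set.Ico_subset_Icc_self hz
  rw [Real.norm_of_nonneg (mul_nonneg (hq r) (hg0 r z hz))]
  exact mul_le_mul_of_nonneg_left (hg1 r z hz) (hq r)

lemma summable_mul_of_sum_range_le_nhdsLT_one {q : ℕ → ℝ} {g : ℕ → ℝ → ℝ} {C : ℝ}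
    (hq : ∀ r, 0 ≤ q r) (hg : ∀ r, Continuous (g r)) (hg0 : ∀ r, 0 ≤ g r 1)
    (hC : ∀ z ∈ Set.Ico (0 : ℝ) 1, ∀ N, ∑ r ∈ range N, q r * g r z ≤ C) :
    Summable fun r => q r * g r 1 := by
  refine summable_of_sum_range_le (c := C) (fun r => mul_nonneg (hq r) (hg0 r)) fun N => ?_
  refine le_of_tendsto ?_ (eventually_of_mem (Ico_mem_nhdsLT zero_lt_one) fun z hz => hC z hz N)
  exact ((continuous_finsetSum _ fun r _ => continuous_const.mul (hg r)).tendsto 1).mono_left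
    nhdsWithin_le_nhds

lemma le_div_of_le_add_comp_affine {α c : ℝ} {k : ℕ} {G : ℝ → ℝ} (hα : α ∈ Set.Ioo 0 1) (hk : k ≠ 0)
    (hG : Tendsto G (𝓝[<] 1) (𝓝 0))
    (hstep : ∀ z ∈ Set.Ico (0 : ℝ) 1, G z ≤ c * (1 - z) ^ k + G (1 - α + α * z)) {z : ℝ}
    (hz : z ∈ Set.Ico (0 : ℝ) 1) : G z ≤ c * (1 - z) ^ k / (1 - α ^ k) := by
  set zₙ : ℕ → ℝ := fun n => 1 - α ^ n * (1 - z)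
  have hpos : ∀ n, 0 < α ^ n * (1 - z) := fun n => mul_pos (pow_pos hα.1 n) (by linarith [hz.2])
  have hmem : ∀ n, zₙ n ∈ Set.Ico (0 : ℝ) 1 := fun n =>
    ⟨sub_nonneg.2 (mul_le_one₀ (pow_le_one₀ hα.1.le hα.2.le) (by linarith [hz.2])
      (by linarith [hz.1])), by linarith [hpos n]⟩
  have hiter : ∀ n, G z ≤ c * (1 - z) ^ k * ∑ j ∈ range n, (α ^ k) ^ j + G (zₙ n) := by
    intro n
    induction n with
    | zero => simp [zₙ]
    | succ n ih =>
      have h := hstep _ (hmem n)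
      have e1 : 1 - α + α * zₙ n = zₙ (n + 1) := by simp only [zₙ]; ring
      have e2 : c * (1 - zₙ n) ^ k = c * (1 - z) ^ k * (α ^ k) ^ n := by
        simp only [zₙ, sub_sub_cancel, mul_pow, ← pow_mul, mul_comm n k]; ring
      rw [e1, e2] at h
      rw [sum_range_succ, mul_add]
      linarith
  have hzₙ_lim : Tendsto zₙ atTop (𝓝[<] 1) := by
    refine tendsto_nhdsWithin_iff.2 ⟨?_, Eventually.of_forall fun n => (hmem n).2⟩
    simpa using ((tendsto_pow_atTop_nhds_zero_of_lt_one hα.1.le hα.2).mul_const (1 - z)).const_sub 1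
  have hlim := ((hasSum_geometric_of_lt_one (pow_nonneg hα.1.le k) (pow_lt_one₀ hα.1.le hα.2 hk)
    ).tendsto_sum_nat.const_mul (c * (1 - z) ^ k)).add (hG.comp hzₙ_lim)
  simpa [div_eq_mul_inv] using ge_of_tendsto' hlim hiter

lemma geom_sum_le_geom_sum_one {z : ℝ} (hz : z ∈ Set.Icc (0 : ℝ) 1) (r : ℕ) :
    ∑ i ∈ range r, z ^ i ≤ ∑ i ∈ range r, (1 : ℝ) ^ i :=
  sum_le_sum fun i _ => pow_le_pow_left₀ hz.1 hz.2 i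

lemma one_sub_sq_mul_sum_geom_sum (z : ℝ) (r : ℕ) :
    (1 - z) ^ 2 * ∑ j ∈ range r, ∑ i ∈ range j, z ^ i = r * (1 - z) - (1 - z ^ r) := by
  calc (1 - z) ^ 2 * ∑ j ∈ range r, ∑ i ∈ range j, z ^ i
      = (1 - z) * ∑ j ∈ range r, (1 - z ^ j) := by
        rw [sq, mul_assoc, mul_sum]; simp only [mul_neg_geom_sum]
    _ = r * (1 - z) - (1 - z ^ r) := by
        rw [sum_sub_distrib, mul_sub, mul_neg_geom_sum]
        simp only [sum_const, card_range, nsmul_eq_mul, mul_one]; ring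

lemma sum_range_natCast (r : ℕ) : ∑ j ∈ range r, (j : ℝ) = ((r : ℝ) ^ 2 - r) / 2 := by
  induction r with
  | zero => simp
  | succ r ih => rw [sum_range_succ, ih]; push_cast; ring

noncomputable def pgf (q : ℕ → ℝ) (z : ℝ) : ℝ := ∑' r, q r * z ^ r

section Pgf

variable {q : ℕ → ℝ} {z : ℝ}

lemma hasSum_one_sub_pgf (hq0 : ∀ r, 0 ≤ q r) (hq1 : HasSum q 1) (hz : z ∈ Set.Icc (0 : ℝ) 1) :
    HasSum (fun r => q r * (1 - z ^ r)) (1 - pgf q z) := by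
  have hs : Summable fun r => q r * z ^ r :=
    hq1.summable.of_nonneg_of_le (fun r => mul_nonneg (hq0 r) (pow_nonneg hz.1 r))
      fun r => mul_le_of_le_one_right (hq0 r) (pow_le_one₀ hz.1 hz.2)
  exact (hq1.sub hs.hasSum).congr_fun fun r => by ring

lemma pgf_mem_Icc (hq0 : ∀ r, 0 ≤ q r) (hq1 : HasSum q 1) (hz : z ∈ Set.Icc (0 : ℝ) 1) :
    pgf q z ∈ Set.Icc (0 : ℝ) 1 :=
  ⟨tsum_nonneg fun r => mul_nonneg (hq0 r) (pow_nonneg hz.1 r),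
    sub_nonneg.1 <| (hasSum_one_sub_pgf hq0 hq1 hz).nonneg fun r =>
      mul_nonneg (hq0 r) (sub_nonneg.2 (pow_le_one₀ hz.1 hz.2))⟩

lemma tendsto_pgf_nhdsLT_one (hq1 : HasSum q 1) : Tendsto (pgf q) (𝓝[<] 1) (𝓝 1) :=
  Real.tendsto_tsum_powerSeries_nhdsWithin_lt hq1.tendsto_sum_nat

lemma hasSum_one_sub_pgf_div (hq0 : ∀ r, 0 ≤ q r) (hq1 : HasSum q 1)
    (hz : z ∈ Set.Ico (0 : ℝ) 1) :
    HasSum (fun r => q r * ∑ i ∈ range r, z ^ i) ((1 - pgf q z) / (1 - z)) := by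
  have hz1 : 1 - z ≠ 0 := (sub_pos.2 hz.2).ne'
  refine ((hasSum_one_sub_pgf hq0 hq1 (Set.Ico_subset_Icc_self hz)).div_const (1 - z)).congr_fun
    fun r => ?_
  rw [← mul_neg_geom_sum]
  field_simp

lemma summable_mean_of_one_sub_pgf_le {C : ℝ} (hq0 : ∀ r, 0 ≤ q r) (hq1 : HasSum q 1)
    (hC : ∀ z ∈ Set.Ico (0 : ℝ) 1, 1 - pgf q z ≤ C * (1 - z)) :
    Summable fun r : ℕ => (r : ℝ) * q r := by
  have h := summable_mul_of_sum_range_le_nhdsLT_one (g := fun r z => ∑ i ∈ range r, z ^ i) hq0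
    (fun r => by fun_prop) (fun r => sum_nonneg fun i _ => zero_le_one.trans_eq (one_pow i).symm)
    fun z hz N => by
      calc _ ≤ (1 - pgf q z) / (1 - z) :=
            sum_le_hasSum _
              (fun r _ => mul_nonneg (hq0 r) (sum_nonneg fun i _ => pow_nonneg hz.1 i))
              (hasSum_one_sub_pgf_div hq0 hq1 hz)
        _ ≤ C := (div_le_iff₀ (sub_pos.2 hz.2)).2 (hC z hz)
  simpa [mul_comm] using h

lemma one_sub_pgf_div_le (hq0 : ∀ r, 0 ≤ q r) (hq1 : HasSum q 1)
    (hm : Summable fun r : ℕ => (r : ℝ) * q r) (hz : z ∈ Set.Ico (0 : ℝ) 1) :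
    (1 - pgf q z) / (1 - z) ≤ ∑' r : ℕ, (r : ℝ) * q r := by
  refine hasSum_le (fun r => ?_) (hasSum_one_sub_pgf_div hq0 hq1 hz) hm.hasSum
  simpa [mul_comm] using mul_le_mul_of_nonneg_left
    (geom_sum_le_geom_sum_one (Set.Ico_subset_Icc_self hz) r) (hq0 r)

lemma tendsto_one_sub_pgf_div (hq0 : ∀ r, 0 ≤ q r) (hq1 : HasSum q 1)
    (hm : Summable fun r : ℕ => (r : ℝ) * q r) :
    Tendsto (fun z => (1 - pgf q z) / (1 - z)) (𝓝[<] 1) (𝓝 (∑' r : ℕ, (r : ℝ) * q r)) := by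
  have h := tendsto_tsum_mul_nhdsLT_one (g := fun r z => ∑ i ∈ range r, z ^ i) hq0
    (fun r => by fun_prop) (fun r z hz => sum_nonneg fun i _ => pow_nonneg hz.1 i)
    (fun r z hz => geom_sum_le_geom_sum_one hz r) (by simpa [mul_comm] using hm)
  simp only [one_pow, sum_const, card_range, nsmul_eq_mul, mul_one] at h
  rw [tsum_congr fun r => mul_comm (q r) r] at h
  exact h.congr' (eventually_of_mem (Ico_mem_nhdsLT zero_lt_one) fun z hz =>
    (hasSum_one_sub_pgf_div hq0 hq1 hz).tsum_eq)

lemma hasSum_mean_mul_sub_div_sq (hq0 : ∀ r, 0 ≤ q r) (hq1 : HasSum q 1)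
    (hm : Summable fun r : ℕ => (r : ℝ) * q r) (hz : z ∈ Set.Ico (0 : ℝ) 1) :
    HasSum (fun r => q r * ∑ j ∈ range r, ∑ i ∈ range j, z ^ i)
      (((∑' r : ℕ, (r : ℝ) * q r) * (1 - z) - (1 - pgf q z)) / (1 - z) ^ 2) := by
  have hz1 : (1 - z) ^ 2 ≠ 0 := pow_ne_zero 2 (sub_pos.2 hz.2).ne'
  refine (((hm.hasSum.mul_right (1 - z)).sub
    (hasSum_one_sub_pgf hq0 hq1 (Set.Ico_subset_Icc_self hz))).div_const _).congr_fun fun r => ?_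
  rw [eq_div_iff hz1]
  linear_combination q r * one_sub_sq_mul_sum_geom_sum z r

lemma mean_mul_sub_one_sub_pgf_nonneg (hq0 : ∀ r, 0 ≤ q r) (hq1 : HasSum q 1)
    (hm : Summable fun r : ℕ => (r : ℝ) * q r) (hz : z ∈ Set.Ico (0 : ℝ) 1) :
    0 ≤ (∑' r : ℕ, (r : ℝ) * q r) * (1 - z) - (1 - pgf q z) := by
  have h := (hasSum_mean_mul_sub_div_sq hq0 hq1 hm hz).nonneg fun r =>
    mul_nonneg (hq0 r) (sum_nonneg fun j _ => sum_nonneg fun i _ => pow_nonneg hz.1 i)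
  simpa using (le_div_iff₀ (pow_pos (sub_pos.2 hz.2) 2)).1 h

lemma hasSum_half_factorialMoment (hm : Summable fun r : ℕ => (r : ℝ) * q r)
    (hm2 : Summable fun r : ℕ => (r : ℝ) ^ 2 * q r) :
    HasSum (fun r => q r * ∑ j ∈ range r, ∑ i ∈ range j, (1 : ℝ) ^ i)
      ((∑' r : ℕ, (r : ℝ) ^ 2 * q r - ∑' r : ℕ, (r : ℝ) * q r) / 2) :=
  ((hm2.hasSum.sub hm.hasSum).div_const 2).congr_fun fun r => by
    simp only [one_pow, sum_const, card_range, nsmul_eq_mul, mul_one, sum_range_natCast]; ring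

lemma summable_sq_of_mean_mul_sub_le {C : ℝ} (hq0 : ∀ r, 0 ≤ q r) (hq1 : HasSum q 1)
    (hm : Summable fun r : ℕ => (r : ℝ) * q r)
    (hC : ∀ z ∈ Set.Ico (0 : ℝ) 1,
      (∑' r : ℕ, (r : ℝ) * q r) * (1 - z) - (1 - pgf q z) ≤ C * (1 - z) ^ 2) :
    Summable fun r : ℕ => (r : ℝ) ^ 2 * q r := by
  have h := summable_mul_of_sum_range_le_nhdsLT_one
    (g := fun r z => ∑ j ∈ range r, ∑ i ∈ range j, z ^ i) hq0 (fun r => by fun_prop)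
    (fun r => sum_nonneg fun j _ => sum_nonneg fun i _ => zero_le_one.trans_eq (one_pow i).symm)
    fun z hz N => by
      calc _ ≤ ((∑' r : ℕ, (r : ℝ) * q r) * (1 - z) - (1 - pgf q z)) / (1 - z) ^ 2 :=
            sum_le_hasSum _ (fun r _ => mul_nonneg (hq0 r)
              (sum_nonneg fun j _ => sum_nonneg fun i _ => pow_nonneg hz.1 i))
              (hasSum_mean_mul_sub_div_sq hq0 hq1 hm hz)
        _ ≤ C := (div_le_iff₀ (pow_pos (sub_pos.2 hz.2) 2)).2 (hC z hz)
  simp only [one_pow, sum_const, card_range, nsmul_eq_mul, mul_one, sum_range_natCast] at h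
  exact ((h.mul_left 2).add hm).congr fun r => by ring

lemma mean_mul_sub_div_sq_le (hq0 : ∀ r, 0 ≤ q r) (hq1 : HasSum q 1)
    (hm : Summable fun r : ℕ => (r : ℝ) * q r) (hm2 : Summable fun r : ℕ => (r : ℝ) ^ 2 * q r)
    (hz : z ∈ Set.Ico (0 : ℝ) 1) :
    ((∑' r : ℕ, (r : ℝ) * q r) * (1 - z) - (1 - pgf q z)) / (1 - z) ^ 2 ≤
      (∑' r : ℕ, (r : ℝ) ^ 2 * q r - ∑' r : ℕ, (r : ℝ) * q r) / 2 :=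
  hasSum_le (fun r => mul_le_mul_of_nonneg_left
      (sum_le_sum fun j _ => geom_sum_le_geom_sum_one (Set.Ico_subset_Icc_self hz) j) (hq0 r))
    (hasSum_mean_mul_sub_div_sq hq0 hq1 hm hz) (hasSum_half_factorialMoment hm hm2)

lemma tendsto_mean_mul_sub_div_sq (hq0 : ∀ r, 0 ≤ q r) (hq1 : HasSum q 1)
    (hm : Summable fun r : ℕ => (r : ℝ) * q r) (hm2 : Summable fun r : ℕ => (r : ℝ) ^ 2 * q r) :
    Tendsto (fun z => ((∑' r : ℕ, (r : ℝ) * q r) * (1 - z) - (1 - pgf q z)) / (1 - z) ^ 2)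
      (𝓝[<] 1) (𝓝 ((∑' r : ℕ, (r : ℝ) ^ 2 * q r - ∑' r : ℕ, (r : ℝ) * q r) / 2)) := by
  have h := tendsto_tsum_mul_nhdsLT_one
    (g := fun r z => ∑ j ∈ range r, ∑ i ∈ range j, z ^ i) hq0 (fun r => by fun_prop)
    (fun r z hz => sum_nonneg fun j _ => sum_nonneg fun i _ => pow_nonneg hz.1 i)
    (fun r z hz => sum_le_sum fun j _ => geom_sum_le_geom_sum_one hz j)
    (hasSum_half_factorialMoment hm hm2).summable
  rw [(hasSum_half_factorialMoment hm hm2).tsum_eq] at h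
  exact h.congr' (eventually_of_mem (Ico_mem_nhdsLT zero_lt_one) fun z hz =>
    (hasSum_mean_mul_sub_div_sq hq0 hq1 hm hz).tsum_eq)

end Pgf

section FunctionalEquation

variable {α : ℝ} {f p : ℕ → ℝ}

lemma one_sub_add_mul_mem_Icc {a z : ℝ} (ha : a ∈ Set.Icc (0 : ℝ) 1) (hz : z ∈ Set.Icc (0 : ℝ) 1) :
    1 - a + a * z ∈ Set.Icc (0 : ℝ) 1 :=
  ⟨by nlinarith [ha.1, ha.2, hz.1], by nlinarith [ha.1, hz.2]⟩

lemma one_sub_add_mul_mem_Ico {a z : ℝ} (ha : a ∈ Set.Ioc (0 : ℝ) 1) (hz : z ∈ Set.Ico (0 : ℝ) 1) :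
    1 - a + a * z ∈ Set.Ico (0 : ℝ) 1 :=
  ⟨by nlinarith [ha.1, ha.2, hz.1], by nlinarith [ha.1, hz.2]⟩

lemma tendsto_one_sub_add_mul_nhdsLT_one (hα : 0 < α) :
    Tendsto (fun z => 1 - α + α * z) (𝓝[<] 1) (𝓝[<] 1) :=
  tendsto_nhdsWithin_iff.2
    ⟨((by fun_prop : Continuous fun z : ℝ => 1 - α + α * z).tendsto' 1 1 (by ring)).mono_left
      nhdsWithin_le_nhds,
    eventually_nhdsWithin_of_forall fun z (hz : z < 1) => show 1 - α + α * z < 1 by nlinarith⟩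

lemma pgf_eq_mul_pgf_of_eq_tprod (hα : α ∈ Set.Icc (0 : ℝ) 1) (hf0 : ∀ k, 0 ≤ f k)
    (hf1 : HasSum f 1)
    (hp : ∀ z ∈ Set.Icc (0 : ℝ) 1, pgf p z = ∏' i : ℕ, pgf f (1 - α ^ i + α ^ i * z))
    {z : ℝ} (hz : z ∈ Set.Icc (0 : ℝ) 1) :
    pgf p z = pgf f z * pgf p (1 - α + α * z) := by
  have hαi : ∀ i : ℕ, α ^ i ∈ Set.Icc (0 : ℝ) 1 := fun i =>
    ⟨pow_nonneg hα.1 i, pow_le_one₀ hα.1 hα.2⟩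
  rw [hp z hz, tprod_eq_zero_mul' (multipliable_of_mem_Icc fun i =>
      pgf_mem_Icc hf0 hf1 (one_sub_add_mul_mem_Icc (hαi _) hz)),
    hp _ (one_sub_add_mul_mem_Icc hα hz)]
  simp only [pow_zero, sub_self, one_mul, zero_add, pow_succ]
  congr 1
  exact tprod_congr fun i => by ring_nf

lemma one_sub_pgf_le_of_pgf_eq (hα : α ∈ Set.Ioo (0 : ℝ) 1) (hf0 : ∀ k, 0 ≤ f k)
    (hf1 : HasSum f 1) (hmf : Summable fun k : ℕ => (k : ℝ) * f k) (hp0 : ∀ r, 0 ≤ p r)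
    (hp1 : HasSum p 1)
    (hFE : ∀ z ∈ Set.Ico (0 : ℝ) 1, pgf p z = pgf f z * pgf p (1 - α + α * z))
    {z : ℝ} (hz : z ∈ Set.Ico (0 : ℝ) 1) :
    1 - pgf p z ≤ (∑' k : ℕ, (k : ℝ) * f k) / (1 - α) * (1 - z) := by
  refine (le_div_of_le_add_comp_affine (G := fun z => 1 - pgf p z)
    (c := ∑' k : ℕ, (k : ℝ) * f k) hα one_ne_zero ?_
    (fun z hz => ?_) hz).trans_eq (by ring)
  · simpa using (tendsto_pgf_nhdsLT_one hp1).const_sub 1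
  have hF := pgf_mem_Icc hf0 hf1 (Set.Ico_subset_Icc_self hz)
  have hPw := pgf_mem_Icc hp0 hp1
    (Set.Ico_subset_Icc_self (one_sub_add_mul_mem_Ico ⟨hα.1, hα.2.le⟩ hz))
  have h1F := (div_le_iff₀ (sub_pos.2 hz.2)).1 (one_sub_pgf_div_le hf0 hf1 hmf hz)
  rw [hFE z hz, pow_one]
  linarith [mul_le_of_le_one_left (sub_nonneg.2 hPw.2) hF.2]

lemma mean_of_pgf_eq (hα : α ∈ Set.Ioo (0 : ℝ) 1) (hf0 : ∀ k, 0 ≤ f k)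
    (hf1 : HasSum f 1) (hmf : Summable fun k : ℕ => (k : ℝ) * f k) (hp0 : ∀ r, 0 ≤ p r)
    (hp1 : HasSum p 1)
    (hFE : ∀ z ∈ Set.Ico (0 : ℝ) 1, pgf p z = pgf f z * pgf p (1 - α + α * z)) :
    (Summable fun r : ℕ => (r : ℝ) * p r) ∧
      ∑' r : ℕ, (r : ℝ) * p r = (∑' k : ℕ, (k : ℝ) * f k) / (1 - α) := by
  have hmp := summable_mean_of_one_sub_pgf_le hp0 hp1 fun z hz =>
    one_sub_pgf_le_of_pgf_eq hα hf0 hf1 hmf hp0 hp1 hFE hz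
  refine ⟨hmp, ?_⟩
  have hquot : ∀ z ∈ Set.Ico (0 : ℝ) 1, (1 - pgf p z) / (1 - z) = (1 - pgf f z) / (1 - z) +
      α * (pgf f z * ((1 - pgf p (1 - α + α * z)) / (1 - (1 - α + α * z)))) := by
    intro z hz
    have hz1 : 1 - z ≠ 0 := (sub_pos.2 hz.2).ne'
    rw [hFE z hz, show 1 - (1 - α + α * z) = α * (1 - z) by ring]
    field_simp [hα.1.ne']
    ring
  have hlim := (tendsto_one_sub_pgf_div hf0 hf1 hmf).add (((tendsto_pgf_nhdsLT_one hf1).mul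
    ((tendsto_one_sub_pgf_div hp0 hp1 hmp).comp (tendsto_one_sub_add_mul_nhdsLT_one hα.1))
    ).const_mul α)
  have h := tendsto_nhds_unique (tendsto_one_sub_pgf_div hp0 hp1 hmp)
    (hlim.congr' (eventually_of_mem (Ico_mem_nhdsLT zero_lt_one) fun z hz => (hquot z hz).symm))
  rw [eq_div_iff (sub_pos.2 hα.2).ne']
  linarith

lemma mean_mul_sub_le_of_pgf_eq (hα : α ∈ Set.Ioo (0 : ℝ) 1) (hf0 : ∀ k, 0 ≤ f k)
    (hf1 : HasSum f 1) (hmf : Summable fun k : ℕ => (k : ℝ) * f k)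
    (hm2f : Summable fun k : ℕ => (k : ℝ) ^ 2 * f k) (hp0 : ∀ r, 0 ≤ p r) (hp1 : HasSum p 1)
    (hmp : Summable fun r : ℕ => (r : ℝ) * p r)
    (hν : ∑' r : ℕ, (r : ℝ) * p r = (∑' k : ℕ, (k : ℝ) * f k) / (1 - α))
    (hFE : ∀ z ∈ Set.Ico (0 : ℝ) 1, pgf p z = pgf f z * pgf p (1 - α + α * z))
    {z : ℝ} (hz : z ∈ Set.Ico (0 : ℝ) 1) :
    (∑' r : ℕ, (r : ℝ) * p r) * (1 - z) - (1 - pgf p z) ≤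
      ((∑' k : ℕ, (k : ℝ) ^ 2 * f k - ∑' k : ℕ, (k : ℝ) * f k) / 2 +
        α * (∑' k : ℕ, (k : ℝ) * f k) * ∑' r : ℕ, (r : ℝ) * p r) / (1 - α ^ 2) * (1 - z) ^ 2 := by
  set μ := ∑' k : ℕ, (k : ℝ) * f k
  set ν := ∑' r : ℕ, (r : ℝ) * p r
  have hν' : ν = μ + α * ν := by rw [hν]; field_simp [(sub_pos.2 hα.2).ne']; ring
  refine (le_div_of_le_add_comp_affine (G := fun z => ν * (1 - z) - (1 - pgf p z))
    (c := (∑' k : ℕ, (k : ℝ) ^ 2 * f k - μ) / 2 + α * μ * ν) hα two_ne_zero ?_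
    (fun z hz => ?_) hz).trans_eq (by ring)
  · have hlin : Tendsto (fun z : ℝ => ν * (1 - z)) (𝓝[<] 1) (𝓝 0) :=
      ((by fun_prop : Continuous fun z : ℝ => ν * (1 - z)).tendsto' 1 0 (by simp)).mono_left
        nhdsWithin_le_nhds
    simpa using hlin.sub ((tendsto_pgf_nhdsLT_one hp1).const_sub 1)
  have hw := one_sub_add_mul_mem_Ico ⟨hα.1, hα.2.le⟩ hz
  have hz1 : 0 ≤ 1 - z := by linarith [hz.2]
  have hF := pgf_mem_Icc hf0 hf1 (Set.Ico_subset_Icc_self hz)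
  have h1F := (div_le_iff₀ (sub_pos.2 hz.2)).1 (one_sub_pgf_div_le hf0 hf1 hmf hz)
  have h2F := (div_le_iff₀ (pow_pos (sub_pos.2 hz.2) 2)).1
    (mean_mul_sub_div_sq_le hf0 hf1 hmf hm2f hz)
  have hGw := mean_mul_sub_one_sub_pgf_nonneg hp0 hp1 hmp hw
  have hν0 : 0 ≤ ν := tsum_nonneg fun r => mul_nonneg r.cast_nonneg (hp0 r)
  have hsplit : ν * (1 - z) - (1 - pgf p z) = (μ * (1 - z) - (1 - pgf f z)) +
      (1 - pgf f z) * (α * ν * (1 - z)) +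
      pgf f z * (ν * (1 - (1 - α + α * z)) - (1 - pgf p (1 - α + α * z))) := by
    rw [hFE z hz]
    linear_combination (1 - z) * hν'
  have h3 := mul_le_mul_of_nonneg_right h1F (mul_nonneg (mul_nonneg hα.1.le hν0) hz1)
  have h4 := mul_le_of_le_one_left hGw hF.2
  linarith

lemma secondMoment_of_pgf_eq (hα : α ∈ Set.Ioo (0 : ℝ) 1) (hf0 : ∀ k, 0 ≤ f k)
    (hf1 : HasSum f 1) (hmf : Summable fun k : ℕ => (k : ℝ) * f k)
    (hm2f : Summable fun k : ℕ => (k : ℝ) ^ 2 * f k) (hp0 : ∀ r, 0 ≤ p r) (hp1 : HasSum p 1)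
    (hmp : Summable fun r : ℕ => (r : ℝ) * p r)
    (hν : ∑' r : ℕ, (r : ℝ) * p r = (∑' k : ℕ, (k : ℝ) * f k) / (1 - α))
    (hFE : ∀ z ∈ Set.Ico (0 : ℝ) 1, pgf p z = pgf f z * pgf p (1 - α + α * z)) :
    (Summable fun r : ℕ => (r : ℝ) ^ 2 * p r) ∧
      (1 - α ^ 2) * (∑' r : ℕ, (r : ℝ) ^ 2 * p r - ∑' r : ℕ, (r : ℝ) * p r) =
        ∑' k : ℕ, (k : ℝ) ^ 2 * f k - ∑' k : ℕ, (k : ℝ) * f k +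
          2 * α * (∑' k : ℕ, (k : ℝ) * f k) * ∑' r : ℕ, (r : ℝ) * p r := by
  have hm2p := summable_sq_of_mean_mul_sub_le hp0 hp1 hmp fun z hz =>
    mean_mul_sub_le_of_pgf_eq hα hf0 hf1 hmf hm2f hp0 hp1 hmp hν hFE hz
  refine ⟨hm2p, ?_⟩
  set μ := ∑' k : ℕ, (k : ℝ) * f k
  set ν := ∑' r : ℕ, (r : ℝ) * p r
  have hν' : ν = μ + α * ν := by rw [hν]; field_simp [(sub_pos.2 hα.2).ne']; ring
  have hquot : ∀ z ∈ Set.Ico (0 : ℝ) 1,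
      (ν * (1 - z) - (1 - pgf p z)) / (1 - z) ^ 2 =
        (μ * (1 - z) - (1 - pgf f z)) / (1 - z) ^ 2 + α * ν * ((1 - pgf f z) / (1 - z)) +
        α ^ 2 * (pgf f z * ((ν * (1 - (1 - α + α * z)) - (1 - pgf p (1 - α + α * z))) /
          (1 - (1 - α + α * z)) ^ 2)) := by
    intro z hz
    have hz1 : 1 - z ≠ 0 := (sub_pos.2 hz.2).ne'
    rw [hFE z hz, show 1 - (1 - α + α * z) = α * (1 - z) by ring]
    field_simp [hα.1.ne']
    linear_combination (1 - z) * hν'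
  have hlim := ((tendsto_mean_mul_sub_div_sq hf0 hf1 hmf hm2f).add
    ((tendsto_one_sub_pgf_div hf0 hf1 hmf).const_mul (α * ν))).add
    (((tendsto_pgf_nhdsLT_one hf1).mul ((tendsto_mean_mul_sub_div_sq hp0 hp1 hmp hm2p).comp
      (tendsto_one_sub_add_mul_nhdsLT_one hα.1))).const_mul (α ^ 2))
  have h := tendsto_nhds_unique (tendsto_mean_mul_sub_div_sq hp0 hp1 hmp hm2p)
    (hlim.congr' (eventually_of_mem (Ico_mem_nhdsLT zero_lt_one) fun z hz => (hquot z hz).symm))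
  linear_combination 2 * h

end FunctionalEquation

/-- Let `α ∈ (0,1)` and let `f` be a pmf on `ℕ` with finite mean
`μ⁽ᶠ⁾ = ∑ k·f(k)` and finite variance `σ⁽ᶠ⁾² = ∑ k²·f(k) − μ⁽ᶠ⁾²`, with pgf `Ψ`, and let
`p` be the pmf with pgf `φ(z) = ∏_{i=0}^∞ Ψ(1 − α^i + α^i z)`. Then the mean and variance
of `p` are finite and `μ⁽ᵖ⁾ = μ⁽ᶠ⁾/(1 − α)`, `σ⁽ᵖ⁾² = (σ⁽ᶠ⁾² + α·μ⁽ᶠ⁾)/(1 − α²)`. -/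
theorem stmt_6 (α : ℝ) (hα : α ∈ Set.Ioo (0 : ℝ) 1)
    (f : ℕ → ℝ) (hf0 : ∀ k, 0 ≤ f k) (hf1 : HasSum f 1)
    (hmean : Summable fun k : ℕ => (k : ℝ) * f k)
    (hmom2 : Summable fun k : ℕ => (k : ℝ) ^ 2 * f k)
    (Ψ : ℝ → ℝ) (hΨ : ∀ z, Ψ z = ∑' k : ℕ, f k * z ^ k)
    (p : ℕ → ℝ) (hp0 : ∀ r, 0 ≤ p r) (hp1 : HasSum p 1)
    (hppgf : ∀ z ∈ Set.Icc (0 : ℝ) 1,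
      (∑' r : ℕ, p r * z ^ r) = ∏' i : ℕ, Ψ (1 - α ^ i + α ^ i * z)) :
    (Summable fun k : ℕ => (k : ℝ) * p k) ∧
    (Summable fun k : ℕ => (k : ℝ) ^ 2 * p k) ∧
    (∑' k : ℕ, (k : ℝ) * p k) = (∑' k : ℕ, (k : ℝ) * f k) / (1 - α) ∧
    (∑' k : ℕ, (k : ℝ) ^ 2 * p k) - (∑' k : ℕ, (k : ℝ) * p k) ^ 2 =
      ((∑' k : ℕ, (k : ℝ) ^ 2 * f k) - (∑' k : ℕ, (k : ℝ) * f k) ^ 2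
        + α * ∑' k : ℕ, (k : ℝ) * f k) / (1 - α ^ 2) := by
  obtain rfl : Ψ = pgf f := funext hΨ
  have hFE : ∀ z ∈ Set.Ico (0 : ℝ) 1, pgf p z = pgf f z * pgf p (1 - α + α * z) := fun z hz =>
    pgf_eq_mul_pgf_of_eq_tprod (Set.Ioo_subset_Icc_self hα) hf0 hf1 hppgf
      (Set.Ico_subset_Icc_self hz)
  obtain ⟨hmp, hν⟩ := mean_of_pgf_eq hα hf0 hf1 hmean hp0 hp1 hFE
  obtain ⟨hm2p, hν₂⟩ := secondMoment_of_pgf_eq hα hf0 hf1 hmean hmom2 hp0 hp1 hmp hν hFE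
  refine ⟨hmp, hm2p, hν, ?_⟩
  have h1α : 1 - α ≠ 0 := (sub_pos.2 hα.2).ne'
  have h1α2 : 1 - α ^ 2 ≠ 0 := by nlinarith [hα.1, hα.2]
  rw [hν] at hν₂ ⊢
  rw [eq_div_iff h1α2]
  field_simp at hν₂ ⊢
  linear_combination (1 - α) * hν₂
end

section
/- Let α, q ∈ (0,1) and λ > 0, set β_j = λ q^j / (1 + λ q^j) for j ≥ 0 and B_n = ∑_{j=0}^∞ β_j^n for n ≥ 1 (these series converge, with B_n ≤ λ^n/(1 − q^n)). Let Ψ(z) = ∏_{j=0}^∞ (1 − β_j (1 − z)) be the pgf of the Heine(λ, q) distribution. Then the marginal pgf of the stationary INAR(1) process with Heine(λ, q) innovations satisfies, for every z ∈ [0,1]: (i) ∏_{i=0}^∞ Ψ(1 − α^i + α^i z) = ∏_{j=0}^∞ [ 1 + ∑_{n=1}^∞ β_j^n (z − 1)^n α^{n(n−1)/2} / ∏_{l=1}^{n} (1 − α^l) ], and (ii) ∏_{i=0}^∞ Ψ(1 − α^i + α^i z) = exp( − ∑_{n=1}^∞ B_n (1 − z)^n / (n (1 − α^n)) ), with all series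 and infinite products converging. -/
/-!
Write `x_j = β_j (1 - z)`. Since `Ψ(1 - αⁱ + αⁱ z) = ∏_j (1 - x_j αⁱ)` and `∑ x_j < ∞`, the double
product may be taken in the other order, so the marginal pgf is `∏_j E(x_j)` with
`E(x) = ∏_i (1 - x αⁱ)`. The series `S(x) = ∑_n (-1)ⁿ α^{n(n-1)/2} xⁿ / ∏_{l ≤ n} (1 - αˡ)`
satisfies `S(x) = (1 - x) S(α x)`, hence `S(x) = ∏_{i<N} (1 - x αⁱ) · S(αᴺ x) → E(x)`: this is
Euler's identity `E = S`, which gives (i). Expanding `-log (1 - x αⁱ)` as a power series and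
summing the geometric series in `i` gives `-log E(x) = ∑_n xⁿ / (n (1 - αⁿ))`; summing over `j`
and exchanging the absolutely convergent double series gives (ii).
-/

open Real Finset Filter Topology

lemma one_sub_abs_le_abs_one_sub_pow {a : ℝ} (ha : |a| ≤ 1) {n : ℕ} (hn : n ≠ 0) :
    1 - |a| ≤ |1 - a ^ n| :=
  calc 1 - |a| ≤ 1 - |a| ^ n := by gcongr; exact pow_le_of_le_one (abs_nonneg a) ha hn
    _ = |1| - |a ^ n| := by rw [abs_one, abs_pow]
    _ ≤ |1 - a ^ n| := abs_sub_abs_le_abs_sub _ _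

lemma one_sub_pow_ne_zero {a : ℝ} (ha : |a| < 1) {n : ℕ} (hn : n ≠ 0) : 1 - a ^ n ≠ 0 :=
  abs_pos.mp ((sub_pos.mpr ha).trans_le (one_sub_abs_le_abs_one_sub_pow ha.le hn))

lemma abs_mul_pow_lt_one {a x : ℝ} (ha : |a| ≤ 1) (hx : |x| < 1) (i : ℕ) : |x * a ^ i| < 1 := by
  rw [abs_mul, abs_pow]
  exact (mul_le_of_le_one_right (abs_nonneg x) (pow_le_one₀ (abs_nonneg a) ha)).trans_lt hx

section Euler

variable {a x : ℝ}

noncomputable def eulerCoeff (a : ℝ) (n : ℕ) : ℝ :=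
  (-1) ^ n * a ^ (n * (n - 1) / 2) / ∏ l ∈ range n, (1 - a ^ (l + 1))

noncomputable def eulerSeries (a x : ℝ) : ℝ := ∑' n, eulerCoeff a n * x ^ n

lemma eulerCoeff_zero (a : ℝ) : eulerCoeff a 0 = 1 := by simp [eulerCoeff]

lemma eulerCoeff_succ_mul (ha : |a| < 1) (n : ℕ) :
    eulerCoeff a (n + 1) * (1 - a ^ (n + 1)) = -(a ^ n * eulerCoeff a n) := by
  have hprod : ∏ l ∈ range n, (1 - a ^ (l + 1)) ≠ 0 :=
    prod_ne_zero_iff.mpr fun l _ => one_sub_pow_ne_zero ha l.succ_ne_zero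
  have hlast := one_sub_pow_ne_zero ha n.succ_ne_zero
  rw [eulerCoeff, eulerCoeff, prod_range_succ, Nat.triangle_succ, pow_add]
  field_simp
  ring

lemma summable_eulerCoeff (ha : |a| < 1) : Summable (eulerCoeff a) := by
  have hsmall : ∀ᶠ n : ℕ in atTop, |a| ^ n ≤ (1 - |a|) / 2 :=
    (tendsto_pow_atTop_nhds_zero_of_lt_one (abs_nonneg a) ha).eventually_le_const
      (by linarith)
  refine summable_of_ratio_norm_eventually_le (r := 1 / 2) (by norm_num) ?_
  filter_upwards [hsmall] with n hn
  have hrec := congrArg abs (eulerCoeff_succ_mul ha n)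
  rw [abs_mul, abs_neg, abs_mul, abs_pow] at hrec
  have hden := one_sub_abs_le_abs_one_sub_pow ha.le n.succ_ne_zero
  simp only [Real.norm_eq_abs]
  nlinarith [abs_nonneg (eulerCoeff a n), abs_nonneg (eulerCoeff a (n + 1))]

lemma summable_eulerCoeff_mul_pow (ha : |a| < 1) (hx : |x| ≤ 1) :
    Summable fun n => eulerCoeff a n * x ^ n := by
  refine (summable_eulerCoeff ha).abs.of_norm_bounded fun n => ?_
  rw [Real.norm_eq_abs, abs_mul, abs_pow]
  exact mul_le_of_le_one_right (abs_nonneg _) (pow_le_one₀ (abs_nonneg x) hx)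

lemma eulerSeries_eq_one_sub_mul (ha : |a| < 1) (hx : |x| ≤ 1) :
    eulerSeries a x = (1 - x) * eulerSeries a (a * x) := by
  have hax : |a * x| ≤ 1 := by
    rw [abs_mul]; exact mul_le_one₀ ha.le (abs_nonneg x) hx
  have hdiff := (summable_eulerCoeff_mul_pow ha hx).hasSum.sub
    (summable_eulerCoeff_mul_pow ha hax).hasSum
  rw [← hasSum_nat_add_iff' 1] at hdiff
  have hshift : HasSum (fun n => eulerCoeff a (n + 1) * x ^ (n + 1)
      - eulerCoeff a (n + 1) * (a * x) ^ (n + 1)) (-x * eulerSeries a (a * x)) := by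
    refine ((summable_eulerCoeff_mul_pow ha hax).hasSum.mul_left (-x)).congr_fun fun n => ?_
    linear_combination x ^ (n + 1) * eulerCoeff_succ_mul ha n
  have := hdiff.unique hshift
  simp only [range_one, sum_singleton, pow_zero, mul_one, sub_self, sub_zero] at this
  unfold eulerSeries at *
  linarith

lemma eulerSeries_eq_prod_mul (ha : |a| < 1) (hx : |x| ≤ 1) (N : ℕ) :
    eulerSeries a x = (∏ i ∈ range N, (1 - x * a ^ i)) * eulerSeries a (a ^ N * x) := by
  induction N with
  | zero => simp
  | succ N ih =>
    have hN : |a ^ N * x| ≤ 1 := by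
      rw [abs_mul, abs_pow]
      exact mul_le_one₀ (pow_le_one₀ (abs_nonneg a) ha.le) (abs_nonneg x) hx
    rw [ih, eulerSeries_eq_one_sub_mul ha hN, prod_range_succ, pow_succ]
    ring_nf

lemma tendsto_eulerSeries_pow_mul (ha : |a| < 1) (hx : |x| ≤ 1) :
    Tendsto (fun N => eulerSeries a (a ^ N * x)) atTop (𝓝 1) := by
  have hlim := tendsto_tsum_of_dominated_convergence (𝓕 := atTop)
    (f := fun N n => eulerCoeff a n * (a ^ N * x) ^ n) (g := fun n => eulerCoeff a n * 0 ^ n)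
    (summable_eulerCoeff ha).abs
    (fun n => by
      simpa using (((tendsto_pow_atTop_nhds_zero_of_abs_lt_one ha).mul_const x).pow n).const_mul
        (eulerCoeff a n))
    (Eventually.of_forall fun N n => by
      rw [Real.norm_eq_abs, abs_mul, abs_pow, abs_mul, abs_pow]
      exact mul_le_of_le_one_right (abs_nonneg _) (pow_le_one₀ (by positivity)
        (mul_le_one₀ (pow_le_one₀ (abs_nonneg a) ha.le) (abs_nonneg x) hx)))
  rwa [tsum_eq_single 0 fun n hn => by simp [hn], pow_zero, mul_one, eulerCoeff_zero] at hlim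

theorem hasSum_eulerCoeff_mul_pow (ha : |a| < 1) (hx : |x| ≤ 1) :
    HasSum (fun n => eulerCoeff a n * x ^ n) (∏' i, (1 - x * a ^ i)) := by
  have hmul : Multipliable fun i => 1 - x * a ^ i := by
    simpa [sub_eq_add_neg] using
      Real.multipliable_one_add_of_summable ((summable_geometric_of_abs_lt_one ha).mul_left x).neg
  have hlim := hmul.hasProd.tendsto_prod_nat.mul (tendsto_eulerSeries_pow_mul ha hx)
  rw [mul_one] at hlim
  have hconst : eulerSeries a x = ∏' i, (1 - x * a ^ i) :=
    tendsto_nhds_unique (tendsto_const_nhds.congr fun N => eulerSeries_eq_prod_mul ha hx N) hlim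
  exact hconst ▸ (summable_eulerCoeff_mul_pow ha hx).hasSum

lemma eulerCoeff_succ_mul_mul_pow (b z : ℝ) (k : ℕ) :
    b ^ (k + 1) * (z - 1) ^ (k + 1) * a ^ ((k + 1) * k / 2)
      / ∏ l ∈ range (k + 1), (1 - a ^ (l + 1)) =
      eulerCoeff a (k + 1) * (b * (1 - z)) ^ (k + 1) := by
  rw [eulerCoeff, Nat.add_sub_cancel, show z - 1 = -1 * (1 - z) by ring, mul_pow, mul_pow]
  ring

lemma hasSum_eulerCoeff_succ_mul_pow (ha : |a| < 1) (hx : |x| ≤ 1) :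
    HasSum (fun n => eulerCoeff a (n + 1) * x ^ (n + 1)) (∏' i, (1 - x * a ^ i) - 1) := by
  simpa [eulerCoeff_zero] using (hasSum_nat_add_iff' 1).mpr (hasSum_eulerCoeff_mul_pow ha hx)

end Euler

section LogExpansion

variable {a x : ℝ}

lemma hasSum_log_one_sub_mul_pow (ha : |a| < 1) (hx : |x| < 1) :
    HasSum (fun i => log (1 - x * a ^ i))
      (-∑' n : ℕ, x ^ (n + 1) / ((n + 1) * (1 - a ^ (n + 1)))) := by
  have hrow (i : ℕ) : HasSum (fun n : ℕ => (x * a ^ i) ^ (n + 1) / ((n : ℝ) + 1))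
      (-log (1 - x * a ^ i)) :=
    hasSum_pow_div_log_of_abs_lt_one (abs_mul_pow_lt_one ha.le hx i)
  have hcol (n : ℕ) : HasSum (fun i : ℕ => (x * a ^ i) ^ (n + 1) / ((n : ℝ) + 1))
      (x ^ (n + 1) / ((n + 1) * (1 - a ^ (n + 1)))) := by
    have hr : |a ^ (n + 1)| < 1 := by
      rw [abs_pow]; exact pow_lt_one₀ (abs_nonneg a) ha n.succ_ne_zero
    rw [div_mul_eq_div_div, div_eq_mul_inv _ (1 - _)]
    refine ((hasSum_geometric_of_abs_lt_one hr).mul_left _).congr_fun fun i => ?_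
    rw [mul_pow, ← pow_mul, ← pow_mul, mul_comm i]
    ring
  have hF : Summable fun p : ℕ × ℕ => (x * a ^ p.1) ^ (p.2 + 1) / ((p.2 : ℝ) + 1) := by
    refine (summable_mul_of_summable_norm (f := fun i : ℕ => |a| ^ i)
      (g := fun n : ℕ => |x| ^ (n + 1)) ?_ ?_).of_norm_bounded fun p => ?_
    · simpa using summable_geometric_of_lt_one (abs_nonneg a) ha
    · simpa [pow_succ] using (summable_geometric_of_lt_one (abs_nonneg x) hx).mul_right |x|
    · simp only [Real.norm_eq_abs, abs_div, abs_pow, abs_mul]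
      have hn : (1 : ℝ) ≤ |(p.2 : ℝ) + 1| := by
        rw [abs_of_pos (by positivity)]; linarith [p.2.cast_nonneg (α := ℝ)]
      calc (|x| * |a| ^ p.1) ^ (p.2 + 1) / |(p.2 : ℝ) + 1| ≤ (|x| * |a| ^ p.1) ^ (p.2 + 1) :=
            div_le_self (by positivity) hn
        _ ≤ |a| ^ p.1 * |x| ^ (p.2 + 1) := by
            rw [mul_pow, mul_comm]
            gcongr
            exact pow_le_of_le_one (by positivity) (pow_le_one₀ (abs_nonneg a) ha.le)
              p.2.succ_ne_zero
  have hrows := hF.hasSum.prod_fiberwise hrow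
  have hcols := ((Equiv.prodComm ℕ ℕ).hasSum_iff.mpr hF.hasSum).prod_fiberwise hcol
  rw [hcols.tsum_eq]
  simpa using hrows.neg

lemma tprod_one_sub_mul_pow_eq_exp (ha : |a| < 1) (hx : |x| < 1) :
    ∏' i, (1 - x * a ^ i) = exp (-∑' n : ℕ, x ^ (n + 1) / ((n + 1) * (1 - a ^ (n + 1)))) :=
  (Real.hasProd_of_hasSum_log (fun i => sub_pos.mpr ((le_abs_self _).trans_lt
    (abs_mul_pow_lt_one ha.le hx i))) (hasSum_log_one_sub_mul_pow ha hx)).tprod_eq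

end LogExpansion

section DoubleProduct

variable {a c : ℝ} {x : ℕ → ℝ}

lemma tprod_tprod_one_sub_mul_pow_comm (ha : |a| < 1) (hx : Summable x) :
    ∏' i, ∏' j, (1 - x j * a ^ i) = ∏' j, ∏' i, (1 - x j * a ^ i) := by
  have hmul {ι : Type} {u : ι → ℝ} (hu : Summable u) : Multipliable fun k => 1 - u k := by
    simpa [sub_eq_add_neg] using Real.multipliable_one_add_of_summable hu.neg
  have hgeom : Summable fun i : ℕ => a ^ i := summable_geometric_of_abs_lt_one ha
  refine Multipliable.tprod_comm' (f := fun j i => 1 - x j * a ^ i)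
    (hmul (u := fun p : ℕ × ℕ => x p.1 * a ^ p.2) ?_) (fun j => hmul (hgeom.mul_left (x j)))
    (fun i => hmul (u := fun j => x j * a ^ i) (hx.mul_right (a ^ i)))
  exact summable_mul_of_summable_norm (f := x) (g := fun i => a ^ i) (by simpa using hx.abs)
    (by simpa using hgeom.abs)

lemma summable_pow_succ_div (ha : |a| < 1) (hc : c < 1) (hxc : ∀ j, |x j| ≤ c)
    (hx : Summable x) :
    Summable fun p : ℕ × ℕ => x p.1 ^ (p.2 + 1) / ((p.2 + 1) * (1 - a ^ (p.2 + 1))) := by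
  have hc0 : 0 ≤ c := (abs_nonneg _).trans (hxc 0)
  have ha' : 0 < 1 - |a| := by linarith
  refine (summable_mul_of_summable_norm (f := fun j => |x j|)
    (g := fun n : ℕ => c ^ n / (1 - |a|)) (by simpa using hx.abs) ?_).of_norm_bounded fun p => ?_
  · simpa [abs_of_nonneg hc0, abs_of_pos ha'] using
      (summable_geometric_of_lt_one hc0 hc).div_const (1 - |a|)
  · have hden : 1 - |a| ≤ |((p.2 : ℝ) + 1) * (1 - a ^ (p.2 + 1))| := by
      rw [abs_mul, abs_of_pos (by positivity : (0 : ℝ) < p.2 + 1)]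
      exact (one_sub_abs_le_abs_one_sub_pow ha.le p.2.succ_ne_zero).trans
        (le_mul_of_one_le_left (abs_nonneg _) (by simp))
    rw [Real.norm_eq_abs, abs_div, abs_pow, pow_succ, mul_div_assoc',
      mul_comm (|x p.1| ^ p.2)]
    gcongr
    exact hxc _

lemma summable_tsum_pow_succ_div (ha : |a| < 1) (hc : c < 1) (hxc : ∀ j, |x j| ≤ c)
    (hx : Summable x) :
    Summable fun n : ℕ => (∑' j, x j ^ (n + 1)) / ((n + 1) * (1 - a ^ (n + 1))) := by
  refine (summable_pow_succ_div ha hc hxc hx).prod_symm.prod.congr fun n => ?_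
  simp only [Prod.swap_prod_mk, tsum_div_const]

theorem tprod_tprod_one_sub_mul_pow_eq_exp (ha : |a| < 1) (hc : c < 1) (hxc : ∀ j, |x j| ≤ c)
    (hx : Summable x) :
    ∏' j, ∏' i, (1 - x j * a ^ i) =
      exp (-∑' n : ℕ, (∑' j, x j ^ (n + 1)) / ((n + 1) * (1 - a ^ (n + 1)))) := by
  have hS := summable_pow_succ_div ha hc hxc hx
  have hrows : Summable fun j => ∑' n : ℕ, x j ^ (n + 1) / ((n + 1) * (1 - a ^ (n + 1))) :=
    hS.prod
  have hswap : ∑' j, ∑' n : ℕ, x j ^ (n + 1) / ((n + 1) * (1 - a ^ (n + 1))) =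
      ∑' n : ℕ, ∑' j, x j ^ (n + 1) / ((n + 1) * (1 - a ^ (n + 1))) :=
    (Summable.tsum_comm (f := fun j (n : ℕ) => x j ^ (n + 1) / ((n + 1) * (1 - a ^ (n + 1))))
      hS).symm
  simp_rw [tprod_one_sub_mul_pow_eq_exp ha ((hxc _).trans_lt hc), ← tsum_div_const, ← hswap]
  exact hrows.hasSum.neg.rexp.tprod_eq

end DoubleProduct

section GeometricBound

variable {β : ℕ → ℝ} {lam q : ℝ} {n : ℕ}

lemma pow_le_geometric (hβ0 : ∀ j, 0 ≤ β j) (hβ : ∀ j, β j ≤ lam * q ^ j) (j : ℕ) :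
    β j ^ n ≤ lam ^ n * (q ^ n) ^ j := by
  rw [← pow_mul, mul_comm n j, pow_mul, ← mul_pow]
  exact pow_le_pow_left₀ (hβ0 j) (hβ j) n

lemma summable_pow_of_le_geometric (hβ0 : ∀ j, 0 ≤ β j) (hβ : ∀ j, β j ≤ lam * q ^ j)
    (hq0 : 0 ≤ q) (hq1 : q < 1) (hn : n ≠ 0) : Summable fun j => β j ^ n :=
  ((summable_geometric_of_lt_one (pow_nonneg hq0 n) (pow_lt_one₀ hq0 hq1 hn)).mul_left
    (lam ^ n)).of_nonneg_of_le (fun j => pow_nonneg (hβ0 j) n) (pow_le_geometric hβ0 hβ)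

lemma tsum_pow_le_of_le_geometric (hβ0 : ∀ j, 0 ≤ β j) (hβ : ∀ j, β j ≤ lam * q ^ j)
    (hq0 : 0 ≤ q) (hq1 : q < 1) (hn : n ≠ 0) : ∑' j, β j ^ n ≤ lam ^ n / (1 - q ^ n) :=
  hasSum_le (pow_le_geometric hβ0 hβ) (summable_pow_of_le_geometric hβ0 hβ hq0 hq1 hn).hasSum
    ((hasSum_geometric_of_lt_one (pow_nonneg hq0 n) (pow_lt_one₀ hq0 hq1 hn)).mul_left (lam ^ n))

end GeometricBound

lemma div_one_add_le_div_one_add {u v : ℝ} (hu : 0 ≤ u) (huv : u ≤ v) :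
    u / (1 + u) ≤ v / (1 + v) := by
  rw [div_le_div_iff₀ (by linarith) (by linarith)]
  nlinarith

/-- Let `α, q ∈ (0,1)` and `λ > 0`, set `β_j = λ q^j / (1 + λ q^j)` and
`B_n = ∑_{j=0}^∞ β_j^n` for `n ≥ 1` (these series converge, with `B_n ≤ λ^n/(1 − q^n)`).
Let `Ψ(z) = ∏_{j=0}^∞ (1 − β_j (1 − z))` be the pgf of the Heine(λ, q) distribution. Then
the marginal pgf of the stationary INAR(1) process with Heine(λ, q) innovations satisfies,
for every `z ∈ [0,1]`:
(i) `∏_{i=0}^∞ Ψ(1 − α^i + α^i z)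
      = ∏_{j=0}^∞ [1 + ∑_{n=1}^∞ β_j^n (z − 1)^n α^{n(n−1)/2} / ∏_{l=1}^{n} (1 − α^l)]`, and
(ii) `∏_{i=0}^∞ Ψ(1 − α^i + α^i z) = exp(− ∑_{n=1}^∞ B_n (1 − z)^n / (n (1 − α^n)))`,
with all series converging (inner series indexed by `n = k + 1`, `k ∈ ℕ`). -/
theorem stmt_19 (α q lam : ℝ) (hα : α ∈ Set.Ioo (0 : ℝ) 1) (hq : q ∈ Set.Ioo (0 : ℝ) 1)
    (hlam : 0 < lam)
    (β : ℕ → ℝ) (hβ : ∀ j, β j = lam * q ^ j / (1 + lam * q ^ j))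
    (B : ℕ → ℝ) (hB : ∀ n, B n = ∑' j : ℕ, β j ^ n)
    (Ψ : ℝ → ℝ) (hΨ : ∀ z, Ψ z = ∏' j : ℕ, (1 - β j * (1 - z))) :
    (∀ n : ℕ, 1 ≤ n →
      (Summable fun j : ℕ => β j ^ n) ∧ B n ≤ lam ^ n / (1 - q ^ n)) ∧
    (∀ z ∈ Set.Icc (0 : ℝ) 1,
      (∀ j : ℕ, Summable fun k : ℕ =>
        β j ^ (k + 1) * (z - 1) ^ (k + 1) * α ^ ((k + 1) * k / 2)
          / ∏ l ∈ Finset.range (k + 1), (1 - α ^ (l + 1))) ∧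
      (Summable fun k : ℕ =>
        B (k + 1) * (1 - z) ^ (k + 1) / ((k + 1 : ℝ) * (1 - α ^ (k + 1)))) ∧
      (∏' i : ℕ, Ψ (1 - α ^ i + α ^ i * z)) =
        (∏' j : ℕ, (1 + ∑' k : ℕ,
          β j ^ (k + 1) * (z - 1) ^ (k + 1) * α ^ ((k + 1) * k / 2)
            / ∏ l ∈ Finset.range (k + 1), (1 - α ^ (l + 1)))) ∧
      (∏' i : ℕ, Ψ (1 - α ^ i + α ^ i * z)) =
        Real.exp (- ∑' k : ℕ,
          B (k + 1) * (1 - z) ^ (k + 1) / ((k + 1 : ℝ) * (1 - α ^ (k + 1))))) := by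
  obtain ⟨hα0, hα1⟩ := hα
  obtain ⟨hq0, hq1⟩ := hq
  have hα' : |α| < 1 := by rwa [abs_of_pos hα0]
  have hu (j : ℕ) : 0 ≤ lam * q ^ j := by positivity
  have hβ0 (j : ℕ) : 0 ≤ β j := hβ j ▸ div_nonneg (hu j) (by linarith [hu j])
  have hβgeom (j : ℕ) : β j ≤ lam * q ^ j := hβ j ▸ div_le_self (hu j) (by linarith [hu j])
  have hβc (j : ℕ) : β j ≤ lam / (1 + lam) := hβ j ▸ div_one_add_le_div_one_add (hu j)
    (mul_le_of_le_one_right hlam.le (pow_le_one₀ hq0.le hq1.le))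
  have hc : lam / (1 + lam) < 1 := (div_lt_one (by linarith)).mpr (by linarith)
  refine ⟨fun n hn => ⟨summable_pow_of_le_geometric hβ0 hβgeom hq0.le hq1 (by omega),
    hB n ▸ tsum_pow_le_of_le_geometric hβ0 hβgeom hq0.le hq1 (by omega)⟩, fun z hz => ?_⟩
  obtain ⟨hz0, hz1⟩ := hz
  set x : ℕ → ℝ := fun j => β j * (1 - z)
  have hx : Summable x := by
    simpa [x] using (summable_pow_of_le_geometric hβ0 hβgeom hq0.le hq1 one_ne_zero).mul_right
      (1 - z)
  have hxc (j : ℕ) : |x j| ≤ lam / (1 + lam) := by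
    rw [abs_of_nonneg (mul_nonneg (hβ0 j) (by linarith))]
    exact (mul_le_of_le_one_right (hβ0 j) (by linarith)).trans (hβc j)
  have hLHS : ∏' i, Ψ (1 - α ^ i + α ^ i * z) = ∏' j, ∏' i, (1 - x j * α ^ i) := by
    rw [← tprod_tprod_one_sub_mul_pow_comm hα' hx]
    refine tprod_congr fun i => (hΨ _).trans (tprod_congr fun j => ?_)
    ring
  have hEuler (j : ℕ) := hasSum_eulerCoeff_succ_mul_pow hα' ((hxc j).trans hc.le)
  have hBx : (fun k : ℕ => B (k + 1) * (1 - z) ^ (k + 1) / ((k + 1 : ℝ) * (1 - α ^ (k + 1)))) =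
      fun k : ℕ => (∑' j, x j ^ (k + 1)) / ((k + 1) * (1 - α ^ (k + 1))) := by
    ext k
    simp only [x, mul_pow, tsum_mul_right, hB]
  simp_rw [eulerCoeff_succ_mul_mul_pow, hBx, hLHS]
  exact ⟨fun j => (hEuler j).summable, summable_tsum_pow_succ_div hα' hc hxc hx,
    tprod_congr fun j => by rw [(hEuler j).tsum_eq]; ring,
    tprod_tprod_one_sub_mul_pow_eq_exp hα' hc hxc hx⟩
end
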